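/- arXiv:1407.7804 — 4 statements merged into one kernel-verified Lean document; each statement's English description precedes it below -/
import Mathlib

section
/- For all x, y ∈ ℝ, the kernel of K_hr*·K_hr, namely (K_hr*K_hr)(x,y) = ∫_ℝ conj(K_hr(r,x))·K_hr(r,y) dr, is given explicitly by √(π/A) · exp{ −[(W⁴ + W²(a·conj(ζ²) + (a−ib)·Re ζ²) + (a/2)(a−ib))/A]·x² − [(W⁴ + W²(a·ζ² + (a+ib)·Re ζ²) + (a/2)(a+ib))/A]·y² + (2W⁴/A)·x·y }, where A = 2W²·Re ζ² + a. -/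
open MeasureTheory Complex Real
open scoped ComplexInnerProductSpace

noncomputable section

/-- The Hilbert space `L²(ℝ, ℂ)`. -/
abbrev Hsp : Type := Lp ℂ 2 (volume : Measure ℝ)

/-- `T` is the integral operator on `L²(ℝ)` with kernel `k`. -/
def IsKerOp (k : ℝ → ℝ → ℂ) (T : Hsp →L[ℂ] Hsp) : Prop :=
  ∀ f : Hsp, ∀ᵐ x : ℝ, (T f : ℝ → ℂ) x = ∫ y : ℝ, k x y * (f : ℝ → ℂ) y

/-- The harmonic-oscillator kernel
`K_hr(x,y) = exp(−W²ζ²(x−y)² − ((a+ib)/2)(x²+y²))`. -/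
def kerHr (W : ℝ) (ζ : ℂ) (a b : ℝ) (x y : ℝ) : ℂ :=
  Complex.exp (-(W : ℂ)^2 * ζ^2 * ((x : ℂ) - (y : ℂ))^2
    - (((a : ℂ) + (b : ℂ) * Complex.I) / 2) * ((x : ℂ)^2 + (y : ℂ)^2))

/-- The eigenvalues `λ_j^hr` of the harmonic oscillator (principal square root). -/
def lamHr (W : ℝ) (ζ : ℂ) (a b : ℝ) (αhr : ℂ) (j : ℕ) : ℂ :=
  ((π : ℂ) / ((W : ℂ)^2 * ζ^2 + αhr + ((a : ℂ) + (b : ℂ) * Complex.I) / 2)) ^ (1/2 : ℂ) *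
    (((W : ℂ)^2 * ζ^2) / ((W : ℂ)^2 * ζ^2 + αhr + ((a : ℂ) + (b : ℂ) * Complex.I) / 2)) ^ j

/-- The squared singular values `(s_j^hr)²` of the harmonic oscillator, where
`A = 2W²·Re ζ² + a`. -/
def ssqHr (W a A : ℝ) (j : ℕ) : ℝ :=
  Real.sqrt (π^2 / (W^4 + 2*a*A + Real.sqrt ((2*W^4 + a*A) * (a*A)))) *
    (W^4 / (W^4 + 2*a*A + Real.sqrt ((2*W^4 + a*A) * (a*A)))) ^ j

/-- The (complex) Gaussian `g_α(x) = (2α/π)^{1/4}·exp(−αx²)`, principal branch. -/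
def gaussC (α : ℂ) (x : ℝ) : ℂ :=
  (2 * α / (π : ℂ)) ^ (1/4 : ℂ) * Complex.exp (-α * (x : ℂ)^2)

end

/-! The integrand `conj K_hr(r,x) · K_hr(r,y)` is the exponential of a quadratic polynomial in `r`
with leading coefficient `-A`, `A = 2W²·Re ζ² + a > 0`, so the integral is Gaussian: completing the
square gives `√(π/A) · exp (B²/(4A) + C)`. Since `ζ² · conj ζ² = 1`, the cross terms of `B²`
collapse to `2W⁴xy` and the stated exponent follows. -/

open ComplexConjugate

theorem integral_cexp_neg_ofReal_mul_sq_add {A : ℝ} (hA : 0 < A) (B C : ℂ) :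
    ∫ r : ℝ, cexp (-(A : ℂ) * r ^ 2 + B * r + C) =
      (√(π / A) : ℂ) * cexp (B ^ 2 / (4 * A) + C) := by
  rw [integral_cexp_quadratic (by simpa using hA), neg_neg, Real.sqrt_eq_rpow,
    Complex.ofReal_cpow (by positivity)]
  push_cast
  congr 2
  ring

theorem conj_kerHr_mul_kerHr (W : ℝ) (ζ : ℂ) (a b r x y : ℝ) :
    conj (kerHr W ζ a b r x) * kerHr W ζ a b r y =
      cexp (-((2 * W ^ 2 * (ζ ^ 2).re + a : ℝ) : ℂ) * r ^ 2
        + 2 * W ^ 2 * (conj (ζ ^ 2) * x + ζ ^ 2 * y) * r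
        + (-(W ^ 2 * conj (ζ ^ 2) + (a - b * I) / 2) * x ^ 2
          - (W ^ 2 * ζ ^ 2 + (a + b * I) / 2) * y ^ 2)) := by
  rw [kerHr, kerHr, ← Complex.exp_conj, ← Complex.exp_add, Complex.ofReal_add,
    Complex.ofReal_mul, Complex.re_eq_add_conj]
  simp only [map_sub, map_mul, map_neg, map_add, map_div₀, map_pow, map_ofNat,
    Complex.conj_ofReal, Complex.conj_I]
  push_cast
  ring_nf

theorem exponent_completeSquare_of_norm_eq_one {z : ℂ} (hz : ‖z‖ = 1) {W a : ℝ}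
    (hA : 2 * W ^ 2 * z.re + a ≠ 0) (b x y : ℝ) :
    (2 * W ^ 2 * (conj z * x + z * y)) ^ 2 / (4 * ((2 * W ^ 2 * z.re + a : ℝ) : ℂ))
        + (-(W ^ 2 * conj z + (a - b * I) / 2) * x ^ 2 - (W ^ 2 * z + (a + b * I) / 2) * y ^ 2) =
      -((W ^ 4 + W ^ 2 * (a * conj z + (a - b * I) * z.re) + a / 2 * (a - b * I))
          / ((2 * W ^ 2 * z.re + a : ℝ) : ℂ)) * x ^ 2
        - ((W ^ 4 + W ^ 2 * (a * z + (a + b * I) * z.re) + a / 2 * (a + b * I))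
          / ((2 * W ^ 2 * z.re + a : ℝ) : ℂ)) * y ^ 2
        + 2 * W ^ 4 / ((2 * W ^ 2 * z.re + a : ℝ) : ℂ) * x * y := by
  have hzz : z * conj z = 1 := by
    rw [Complex.mul_conj, Complex.normSq_eq_norm_sq, hz]; norm_num
  have hA_eq : (((2 * W ^ 2 * z.re + a : ℝ)) : ℂ) = W ^ 2 * (z + conj z) + a := by
    push_cast [Complex.re_eq_add_conj]; ring
  have hA_ne : (W ^ 2 * (z + conj z) + a : ℂ) ≠ 0 := by
    rw [← hA_eq]; exact_mod_cast hA
  rw [hA_eq, Complex.re_eq_add_conj]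
  field_simp
  linear_combination (-8 * W ^ 4 * (x - y) ^ 2) * hzz

/-- explicit formula for the kernel of `K_hr*·K_hr`, with `A = 2W²Re ζ² + a`. -/
theorem stmt_7 :
    ∀ (W : ℝ) (ζ : ℂ) (a b : ℝ), 0 < W → ‖ζ‖ = 1 → 0 < (ζ^2).re → 0 < a →
    ∀ x y : ℝ,
      (∫ r : ℝ, starRingEnd ℂ (kerHr W ζ a b r x) * kerHr W ζ a b r y) =
        (Real.sqrt (π / (2*W^2*(ζ^2).re + a)) : ℂ) *
        Complex.exp (
          -(((W : ℂ)^4 + (W : ℂ)^2 * ((a : ℂ) * starRingEnd ℂ (ζ^2)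
              + ((a : ℂ) - (b : ℂ) * Complex.I) * ((ζ^2).re : ℂ))
              + ((a : ℂ)/2) * ((a : ℂ) - (b : ℂ) * Complex.I))
            / ((2*W^2*(ζ^2).re + a : ℝ) : ℂ)) * (x : ℂ)^2
          - (((W : ℂ)^4 + (W : ℂ)^2 * ((a : ℂ) * ζ^2
              + ((a : ℂ) + (b : ℂ) * Complex.I) * ((ζ^2).re : ℂ))
              + ((a : ℂ)/2) * ((a : ℂ) + (b : ℂ) * Complex.I))
            / ((2*W^2*(ζ^2).re + a : ℝ) : ℂ)) * (y : ℂ)^2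
          + ((2 * (W : ℂ)^4) / ((2*W^2*(ζ^2).re + a : ℝ) : ℂ)) * (x : ℂ) * (y : ℂ)) := by
  intro W ζ a b _ hζ hre ha x y
  have hA : 0 < 2 * W ^ 2 * (ζ ^ 2).re + a := by positivity
  simp_rw [conj_kerHr_mul_kerHr]
  rw [integral_cexp_neg_ofReal_mul_sq_add hA,
    exponent_completeSquare_of_norm_eq_one (by rw [norm_pow, hζ, one_pow]) hA.ne']
end

section
/- Assume additionally that ζ²(a+ib) is real and strictly positive. Then for every fixed j ∈ ℕ there exist constants C_j, W₀ (depending on a, b, ζ, j) such that for all W ≥ W₀, |s_j^hr/|λ_j^hr| − 1| ≤ C_j·W^{−2}, where λ_j^hr = √(π/(W²ζ² + α_hr + (a+ib)/2))·(W²ζ²/(W²ζ² + α_hr + (a+ib)/2))^j are the eigenvalues of K_hr and (s_j^hr)² = √(π²/(W⁴ + 2aA + √((2W⁴ + aA)aA)))·(W⁴/(W⁴ + 2aA + √((2W⁴ + aA)aA)))^j, with A = 2W²Re ζ² + a, are the squared singular values of K_hr. -/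
open MeasureTheory Complex Real
open scoped ComplexInnerProductSpace

/-! Put `z = ζ²`, `c = a + ib` and `ρ = zc > 0`. Since `|z| = 1`, `c = ρ z̄`, so `a = ρ Re z`; and
`α_hr - W√ρ` stays bounded, because `α_hr² - W²ρ = c²/4` while `|α_hr + W√ρ| ≥ W√ρ`.
Both `s_j^hr` and `|λ_j^hr|` are explicit, and their ratio is `q^((2j+1)/4)` with
`q = |W²z + α_hr + c/2|² / den`, `den` being the denominator in `(s_j^hr)²`. Expanding, numerator
and denominator of `q` are both `W⁴ + 2 Re z √ρ W³ + O(W²)` (the cubic terms match because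
`√(a Re z) = Re z √ρ`), so `q = 1 + O(W⁻²)`, and `x ↦ x^p` is differentiable at `1`. -/

open Asymptotics Filter Topology

theorem abs_norm_add_sq_sub_norm_sq_le {E : Type*} [SeminormedAddCommGroup E] (u v : E) :
    |‖u + v‖ ^ 2 - ‖u‖ ^ 2| ≤ (2 * ‖u‖ + ‖v‖) * ‖v‖ := by
  have hdiff : |‖u + v‖ - ‖u‖| ≤ ‖v‖ := by
    simpa using abs_norm_sub_norm_le (u + v) u
  have hsum : ‖u + v‖ + ‖u‖ ≤ 2 * ‖u‖ + ‖v‖ := by linarith [norm_add_le u v]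
  calc |‖u + v‖ ^ 2 - ‖u‖ ^ 2| = |‖u + v‖ - ‖u‖| * (‖u + v‖ + ‖u‖) := by
        rw [sq_sub_sq, abs_mul, abs_of_nonneg (by positivity : 0 ≤ ‖u + v‖ + ‖u‖),
          mul_comm]
    _ ≤ ‖v‖ * (2 * ‖u‖ + ‖v‖) := by gcongr
    _ = _ := mul_comm _ _

theorem Complex.norm_sub_ofReal_mul_le {α : ℂ} {x : ℝ} (hα : 0 ≤ α.re) :
    ‖α - x‖ * x ≤ ‖α ^ 2 - (x : ℂ) ^ 2‖ := by
  have hx : x ≤ ‖α + x‖ := by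
    have := (le_abs_self (α.re + x)).trans (Complex.abs_re_le_norm (α + x))
    linarith
  rw [sq_sub_sq, norm_mul, mul_comm ‖α + x‖]
  gcongr

theorem Complex.re_eq_mul_re_of_mul_eq_ofReal {z c : ℂ} {ρ : ℝ} (hz : ‖z‖ = 1)
    (hzc : z * c = ρ) : c.re = ρ * z.re := by
  have hc : c = ρ * (starRingEnd ℂ) z := by
    calc c = (starRingEnd ℂ) z * z * c := by rw [Complex.conj_mul', hz]; simp
      _ = ρ * (starRingEnd ℂ) z := by rw [mul_assoc, hzc, mul_comm]
  rw [hc, Complex.re_ofReal_mul, Complex.conj_re]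

theorem Complex.sq_norm_sq_mul_add (W σ : ℝ) {z : ℂ} (hz : ‖z‖ = 1) :
    ‖(W : ℂ) ^ 2 * z + W * σ‖ ^ 2 = W ^ 4 + 2 * z.re * σ * W ^ 3 + σ ^ 2 * W ^ 2 := by
  have hz' : z.re ^ 2 + z.im ^ 2 = 1 := by
    rw [← Complex.normSq_add_mul_I, Complex.re_add_im, Complex.normSq_eq_norm_sq, hz, one_pow]
  rw [Complex.sq_norm, Complex.normSq_apply]
  simp only [Complex.add_re, Complex.add_im, Complex.mul_re, Complex.mul_im, Complex.ofReal_re,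
    Complex.ofReal_im, ← Complex.ofReal_pow]
  linear_combination W ^ 4 * hz'

theorem Real.sqrt_sq_add_sub_le {x y : ℝ} (hx : 0 < x) (hy : 0 ≤ y) :
    √(x ^ 2 + y) - x ≤ y / (2 * x) := by
  have h : √(x ^ 2 + y) ≤ x + y / (2 * x) := by
    rw [Real.sqrt_le_iff]
    refine ⟨by positivity, ?_⟩
    have : (x + y / (2 * x)) ^ 2 = x ^ 2 + y + (y / (2 * x)) ^ 2 := by field_simp; ring
    nlinarith [sq_nonneg (y / (2 * x))]
  linarith

theorem one_isBigO_sq {ι : Type*} {l : Filter ι} {W : ι → ℝ} (hW : Tendsto W l atTop) :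
    (fun _ => (1 : ℝ)) =O[l] (fun i => W i ^ 2) :=
  IsBigO.of_bound' <| (hW.eventually_ge_atTop 1).mono fun i hi => by
    rw [norm_one, Real.norm_eq_abs, abs_of_nonneg (sq_nonneg _)]
    nlinarith

theorem isBigO_rpow_sub_one {ι : Type*} {l : Filter ι} {q : ι → ℝ}
    (hq : Tendsto q l (𝓝 1)) (p : ℝ) :
    (fun i => q i ^ p - 1) =O[l] (fun i => q i - 1) := by
  have h := (Real.hasDerivAt_rpow_const (p := p) (Or.inl one_ne_zero)).isBigO_sub.comp_tendsto hq
  simp only [Real.one_rpow] at h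
  exact h

theorem isBigO_div_sub_one {ι : Type*} {l : Filter ι} {W : ι → ℝ} (hW : Tendsto W l atTop)
    {P Q M : ι → ℝ} (hP : (fun i => P i - M i) =O[l] (fun i => W i ^ 2))
    (hQ : (fun i => Q i - M i) =O[l] (fun i => W i ^ 2)) (hQW : ∀ᶠ i in l, W i ^ 4 ≤ Q i) :
    (fun i => P i / Q i - 1) =O[l] (fun i => W i ^ (-2 : ℝ)) := by
  have hPQ : (fun i => (P i - Q i) * (W i ^ 4)⁻¹) =O[l] (fun i => W i ^ 2 * (W i ^ 4)⁻¹) :=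
    ((hP.sub hQ).congr_left fun i => by ring).mul (isBigO_refl _ l)
  have hpos := hW.eventually_gt_atTop 0
  refine (IsBigO.of_bound 1 ?_).trans (hPQ.trans_eventuallyEq ?_)
  · filter_upwards [hpos, hQW] with i hi hQi
    have hQ0 : 0 < Q i := lt_of_lt_of_le (by positivity) hQi
    rw [one_mul, div_sub_one hQ0.ne', norm_div, norm_mul, norm_inv, Real.norm_of_nonneg hQ0.le,
      Real.norm_of_nonneg (by positivity : 0 ≤ W i ^ 4), div_eq_mul_inv]
    gcongr
  · filter_upwards [hpos] with i hi
    rw [Real.rpow_neg hi.le, Real.rpow_two]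
    field_simp

theorem isBigO_sub_mul_sqrt_of_sq_eq {ι : Type*} {l : Filter ι} {W : ι → ℝ}
    (hW : Tendsto W l atTop) {α : ι → ℂ} {ρ : ℝ} (hρ : 0 < ρ) (c : ℂ)
    (hα : ∀ᶠ i in l, 0 ≤ (α i).re ∧ α i ^ 2 = (W i : ℂ) ^ 2 * ρ + c) :
    (fun i => α i - W i * √ρ) =O[l] (fun _ => (1 : ℝ)) := by
  refine IsBigO.of_bound ‖c‖ ?_
  filter_upwards [(hW.atTop_mul_const (Real.sqrt_pos.2 hρ)).eventually_ge_atTop 1, hα]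
    with i hi ⟨hre, hsq⟩
  have hsqrt : ((√ρ : ℝ) : ℂ) ^ 2 = ρ := by exact_mod_cast Real.sq_sqrt hρ.le
  have key := Complex.norm_sub_ofReal_mul_le (x := W i * √ρ) hre
  rw [hsq, Complex.ofReal_mul, mul_pow, hsqrt, add_sub_cancel_left] at key
  rw [norm_one, mul_one]
  nlinarith [norm_nonneg (α i - W i * √ρ)]

theorem isBigO_sq_norm_sub {ι : Type*} {l : Filter ι} {W : ι → ℝ} (hW : Tendsto W l atTop)
    {z : ℂ} (hz : ‖z‖ = 1) (σ : ℝ) {D : ι → ℂ}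
    (hD : (fun i => D i - ((W i : ℂ) ^ 2 * z + W i * σ)) =O[l] (fun _ => (1 : ℝ))) :
    (fun i => ‖D i‖ ^ 2 - (W i ^ 4 + 2 * z.re * σ * W i ^ 3)) =O[l] (fun i => W i ^ 2) := by
  set u : ι → ℂ := fun i => (W i : ℂ) ^ 2 * z + W i * σ
  set v : ι → ℂ := fun i => D i - u i
  have hu : (fun i => ‖u i‖) =O[l] (fun i => W i ^ 2) := by
    refine IsBigO.of_bound (1 + |σ|) <| (hW.eventually_ge_atTop 1).mono fun i hi => ?_
    have : ‖u i‖ ≤ W i ^ 2 + W i * |σ| := by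
      refine (norm_add_le _ _).trans_eq ?_
      simp [hz, abs_of_nonneg (zero_le_one.trans hi)]
    have hWW : W i ≤ W i ^ 2 := by nlinarith
    rw [norm_norm, Real.norm_of_nonneg (sq_nonneg _)]
    nlinarith [mul_le_mul_of_nonneg_right hWW (abs_nonneg σ)]
  have hv : (fun i => ‖v i‖) =O[l] (fun _ => (1 : ℝ)) := hD.norm_left
  have hsum : (fun i => 2 * ‖u i‖ + ‖v i‖) =O[l] (fun i => W i ^ 2) :=
    (hu.const_mul_left 2).add (hv.trans (one_isBigO_sq hW))
  have hcross : (fun i => ‖u i + v i‖ ^ 2 - ‖u i‖ ^ 2) =O[l] (fun i => W i ^ 2) := by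
    refine (IsBigO.of_bound 1 (Eventually.of_forall fun i => ?_)).trans
      ((hsum.mul hv).congr_right fun i => mul_one _)
    rw [one_mul, Real.norm_eq_abs, Real.norm_of_nonneg (by positivity)]
    exact abs_norm_add_sq_sub_norm_sq_le _ _
  refine (hcross.add ((isBigO_refl (fun i => W i ^ 2) l).const_mul_left (σ ^ 2))).congr_left
    fun i => ?_
  simp only [u, v, add_sub_cancel, Complex.sq_norm_sq_mul_add _ _ hz]
  ring

noncomputable def ssqDen (W a A : ℝ) : ℝ :=
  W ^ 4 + 2 * a * A + √((2 * W ^ 4 + a * A) * (a * A))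

theorem pow_four_le_ssqDen {W a A : ℝ} (h : 0 ≤ a * A) : W ^ 4 ≤ ssqDen W a A := by
  have := Real.sqrt_nonneg ((2 * W ^ 4 + a * A) * (a * A))
  rw [ssqDen]
  linarith

theorem isBigO_ssqDen_sub {a m : ℝ} (ha : 0 < a) (hm : 0 < m) :
    (fun W => ssqDen W a (2 * W ^ 2 * m + a) - (W ^ 4 + 2 * √(a * m) * W ^ 3))
      =O[atTop] (fun W => W ^ 2) := by
  set K := 2 * a * m + a ^ 2
  set r := √(a * m)
  have hr : 0 < r := Real.sqrt_pos.2 (mul_pos ha hm)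
  have hr2 : r ^ 2 = a * m := Real.sq_sqrt (by positivity)
  refine IsBigO.of_bound (2 * K + (2 * a ^ 2 + K ^ 2) / (4 * r)) <|
    (eventually_ge_atTop 1).mono fun W hW => ?_
  set k := a * (2 * W ^ 2 * m + a)
  have hk : 0 ≤ k := by positivity
  have hkK : k ≤ K * W ^ 2 := by
    have : a ^ 2 ≤ a ^ 2 * W ^ 2 := le_mul_of_one_le_right (sq_nonneg a) (one_le_pow₀ hW)
    simp only [k, K]
    nlinarith
  set x := 2 * r * W ^ 3
  set y := 2 * a ^ 2 * W ^ 4 + k ^ 2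
  have hx : 0 < x := by positivity
  have hy : 0 ≤ y := by positivity
  have hX : (2 * W ^ 4 + k) * k = x ^ 2 + y := by
    simp only [x, y, k]
    linear_combination -4 * W ^ 6 * hr2
  have hlow : x ≤ √(x ^ 2 + y) := Real.le_sqrt_of_sq_le (by linarith)
  have hyx : y / (2 * x) ≤ (2 * a ^ 2 + K ^ 2) / (4 * r) * W ^ 2 := by
    have hyK : y ≤ (2 * a ^ 2 + K ^ 2) * W ^ 4 := by
      have : k ^ 2 ≤ (K * W ^ 2) ^ 2 := pow_le_pow_left₀ hk hkK 2
      simp only [y]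
      nlinarith
    rw [div_le_iff₀ (by positivity)]
    calc y ≤ (2 * a ^ 2 + K ^ 2) * W ^ 4 := hyK
      _ ≤ (2 * a ^ 2 + K ^ 2) * W ^ 5 := by gcongr; norm_num
      _ = (2 * a ^ 2 + K ^ 2) / (4 * r) * W ^ 2 * (2 * x) := by field_simp; ring
  have hup := Real.sqrt_sq_add_sub_le hx hy
  rw [Real.norm_eq_abs, Real.norm_of_nonneg (sq_nonneg W), ssqDen, hX, abs_le]
  constructor <;> nlinarith

theorem sqrt_ssqHr {W a A : ℝ} (hden : 0 ≤ ssqDen W a A) (j : ℕ) :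
    √(ssqHr W a A j) = √(π / √(ssqDen W a A)) * (W ^ 2 / √(ssqDen W a A)) ^ j := by
  set s := √(ssqDen W a A)
  have hs2 : ssqDen W a A = s ^ 2 := (Real.sq_sqrt hden).symm
  have hssq : ssqHr W a A j = π / s * ((W ^ 2 / s) ^ j) ^ 2 := by
    rw [ssqHr, ← ssqDen, hs2, ← div_pow, Real.sqrt_sq (by positivity), ← pow_mul, div_pow,
      div_pow, ← pow_mul]
    ring_nf
  rw [hssq, Real.sqrt_mul (by positivity), Real.sqrt_sq (by positivity)]

theorem norm_lamHr {ζ : ℂ} (hζ : ‖ζ‖ = 1) (W a b : ℝ) (α : ℂ) (j : ℕ) :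
    ‖lamHr W ζ a b α j‖ =
      √(π / ‖(W : ℂ) ^ 2 * ζ ^ 2 + α + ((a : ℂ) + b * Complex.I) / 2‖) *
        (W ^ 2 / ‖(W : ℂ) ^ 2 * ζ ^ 2 + α + ((a : ℂ) + b * Complex.I) / 2‖) ^ j := by
  have hhalf : (1 / 2 : ℂ) = ((1 / 2 : ℝ) : ℂ) := by push_cast; rfl
  rw [lamHr, norm_mul, norm_pow, hhalf, Complex.norm_cpow_real, ← Real.sqrt_eq_rpow, norm_div,
    norm_div, norm_mul, norm_pow, norm_pow, hζ, Complex.norm_real, Complex.norm_real,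
    Real.norm_of_nonneg Real.pi_pos.le, Real.norm_eq_abs, sq_abs, one_pow, mul_one]

theorem sqrt_div_mul_pow_div_eq_rpow {c d s W : ℝ} (hc : 0 < c) (hd : 0 ≤ d) (hs : 0 < s)
    (hW : W ≠ 0) (j : ℕ) :
    √(c / s) * (W ^ 2 / s) ^ j / (√(c / d) * (W ^ 2 / d) ^ j) =
      (d ^ 2 / s ^ 2) ^ ((2 * j + 1) / 4 : ℝ) := by
  rcases hd.eq_or_lt with rfl | hd
  · rw [div_zero, Real.sqrt_zero, zero_mul, div_zero, zero_pow two_ne_zero, zero_div,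
      Real.zero_rpow (by positivity)]
  have hsplit : √(c / s) * (W ^ 2 / s) ^ j =
      √(c / d) * (W ^ 2 / d) ^ j * (√(d / s) * (d / s) ^ j) := by
    rw [mul_mul_mul_comm, ← Real.sqrt_mul (by positivity), ← mul_pow]
    congr 2 <;> field_simp
  rw [hsplit, mul_div_cancel_left₀ _ (by positivity), ← div_pow,
    ← Real.rpow_natCast (d / s) 2, ← Real.rpow_mul (by positivity), Real.sqrt_eq_rpow,
    ← Real.rpow_natCast (d / s) j, ← Real.rpow_add (by positivity)]
  congr 1
  push_cast
  ring

theorem sqrt_ssqHr_div_norm_lamHr {ζ : ℂ} (hζ : ‖ζ‖ = 1) {W a A : ℝ} (hW : W ≠ 0)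
    (hden : 0 < ssqDen W a A) (b : ℝ) (α : ℂ) (j : ℕ) :
    √(ssqHr W a A j) / ‖lamHr W ζ a b α j‖ =
      (‖(W : ℂ) ^ 2 * ζ ^ 2 + α + ((a : ℂ) + b * Complex.I) / 2‖ ^ 2 / ssqDen W a A) ^
        ((2 * j + 1) / 4 : ℝ) := by
  rw [sqrt_ssqHr hden.le, norm_lamHr hζ, sqrt_div_mul_pow_div_eq_rpow Real.pi_pos
    (norm_nonneg _) (Real.sqrt_pos.2 hden) hW, Real.sq_sqrt hden.le]

/-- Pairs `(W, α_hr)` with `W → ∞`; bounds along this filter are uniform in the root. -/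
def hrRootFilter (ζ : ℂ) (a b : ℝ) : Filter (ℝ × ℂ) :=
  comap Prod.fst atTop ⊓ 𝓟 {p | 0 < p.2.re ∧ p.2 ^ 2 =
    (p.1 : ℂ) ^ 2 * ζ ^ 2 * ((a : ℂ) + b * Complex.I) + ((a : ℂ) + b * Complex.I) ^ 2 / 4}

theorem isBigO_sqrt_ssqHr_div_norm_lamHr_sub_one {ζ : ℂ} {a b : ℝ} (hζ : ‖ζ‖ = 1)
    (hm : 0 < (ζ ^ 2).re) (ha : 0 < a) (him : (ζ ^ 2 * ((a : ℂ) + b * Complex.I)).im = 0)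
    (hρ : 0 < (ζ ^ 2 * ((a : ℂ) + b * Complex.I)).re) (j : ℕ) :
    (fun p : ℝ × ℂ =>
        √(ssqHr p.1 a (2 * p.1 ^ 2 * (ζ ^ 2).re + a) j) / ‖lamHr p.1 ζ a b p.2 j‖ - 1)
      =O[hrRootFilter ζ a b] (fun p => p.1 ^ (-2 : ℝ)) := by
  set z := ζ ^ 2
  set c : ℂ := (a : ℂ) + b * Complex.I
  set ρ := (z * c).re
  have hz : ‖z‖ = 1 := by simp [z, hζ]
  have hzc : z * c = ρ := Complex.ext rfl (by simpa using him)
  have haρ : a = ρ * z.re := by simpa [c] using Complex.re_eq_mul_re_of_mul_eq_ofReal hz hzc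
  have hσ : √(a * z.re) = z.re * √ρ := by
    rw [haρ, show ρ * z.re * z.re = z.re * z.re * ρ by ring, Real.sqrt_mul (mul_self_nonneg _),
      Real.sqrt_mul_self hm.le]
  have hW : Tendsto Prod.fst (hrRootFilter ζ a b) atTop := tendsto_comap.mono_left inf_le_left
  have hroot := isBigO_sub_mul_sqrt_of_sq_eq hW hρ (c ^ 2 / 4) (α := Prod.snd) <|
    eventually_inf_principal.2 <| Eventually.of_forall fun p ⟨hre, hsq⟩ =>
      ⟨hre.le, by rw [hsq, mul_assoc, hzc]⟩
  have hP := isBigO_sq_norm_sub hW hz √ρ (D := fun p => (p.1 : ℂ) ^ 2 * z + p.2 + c / 2)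
    ((hroot.add (isBigO_const_const (c / 2) one_ne_zero _)).congr_left fun p => by ring)
  have hQ := (isBigO_ssqDen_sub ha hm).comp_tendsto hW
  simp only [Function.comp_def, hσ, ← mul_assoc] at hQ
  have hq := isBigO_div_sub_one hW hP hQ
    (Eventually.of_forall fun p => pow_four_le_ssqDen (by positivity))
  have hq1 := hq.trans_tendsto ((tendsto_rpow_neg_atTop two_pos).comp hW)
  rw [tendsto_sub_nhds_zero_iff] at hq1
  refine ((isBigO_rpow_sub_one hq1 ((2 * j + 1) / 4)).trans hq).congr' ?_ EventuallyEq.rfl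
  filter_upwards [hW.eventually_gt_atTop 0] with p hp
  rw [sqrt_ssqHr_div_norm_lamHr hζ hp.ne'
    (lt_of_lt_of_le (by positivity) (pow_four_le_ssqDen (by positivity)))]

/-- if `ζ²(a+ib)` is real and positive, then for each fixed `j`,
`s_j^hr/|λ_j^hr| = 1 + O(W^{−2})`. -/
theorem stmt_9 :
    ∀ (ζ : ℂ) (a b : ℝ), ‖ζ‖ = 1 → 0 < (ζ^2).re → 0 < a →
    (ζ^2 * ((a : ℂ) + (b : ℂ) * Complex.I)).im = 0 →
    0 < (ζ^2 * ((a : ℂ) + (b : ℂ) * Complex.I)).re →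
    ∀ j : ℕ, ∃ Cj : ℝ, 0 < Cj ∧ ∃ W₀ : ℝ, 0 < W₀ ∧
    ∀ W : ℝ, W₀ ≤ W →
    ∀ αhr : ℂ, 0 < αhr.re →
      αhr^2 = (W : ℂ)^2 * ζ^2 * ((a : ℂ) + (b : ℂ) * Complex.I)
        + ((a : ℂ) + (b : ℂ) * Complex.I)^2 / 4 →
      |Real.sqrt (ssqHr W a (2*W^2*(ζ^2).re + a) j) / ‖lamHr W ζ a b αhr j‖ - 1|
        ≤ Cj * W ^ (-2 : ℝ) := by
  intro ζ a b hζ hm ha him hρ j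
  obtain ⟨C, hC, hbound⟩ :=
    (isBigO_sqrt_ssqHr_div_norm_lamHr_sub_one hζ hm ha him hρ j).exists_pos
  obtain ⟨W₀, hW₀⟩ :=
    eventually_atTop.1 (eventually_comap.1 (eventually_inf_principal.1 hbound.bound))
  refine ⟨C, hC, max W₀ 1, by positivity, fun W hW α hα hα2 => ?_⟩
  have hW1 : 0 ≤ W := zero_le_one.trans (le_of_max_le_right hW)
  simpa [Real.norm_of_nonneg (Real.rpow_nonneg hW1 _)] using
    hW₀ W (le_of_max_le_left hW) (W, α) rfl ⟨hα, hα2⟩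
end

section
/- Assume additionally that ζ²(a+ib) is real and strictly positive, and let α > 0 be the positive real number with α² = W²·ζ²(a+ib), μ = √(π/(W²ζ² + α)) (principal branch) and g_α(x) = (2α/π)^{1/4}·exp(−αx²). Then for every 0 < ε < 1 there exist constants C_ε, W₀ (depending on a, b, ζ, ε) such that for all W ≥ W₀, ‖K_hr g_α − μ·g_α‖_{L²(ℝ)} ≤ C_ε·|μ|·W^{−2+2ε}. -/
open MeasureTheory Complex Real
open scoped ComplexInnerProductSpace

/-!
With `c = W²ζ²`, `d = (a+ib)/2` and `s = c + α + d`, the relation `α² = 2cd` turns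
`∫ K_hr(x,y) g_α(y) dy` into the closed form `√(π/s) · exp(-(d²/s) x²) · g_α(x)`, so
`K_hr g_α - μ g_α = (√(π/s) e^{-(d²/s)x²} - μ) g_α` with `μ = √(π/(c+α))`.
Since `|s| ≥ W² Re ζ²`, both `|√(π/s) - μ| / |μ|` and `|d²/s|` are `O(W⁻²)`; bounding
`|e^{-δx²} - 1| ≤ |δ| x² e^{|δ|x²}` against the Gaussian `e^{-αx²/2}` turns this into an
`L²` bound `O(|μ| W⁻²)`, which is at most `C |μ| W^{-2+2ε}` for `W ≥ 1`.
-/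

namespace Complex

lemma norm_exp_sub_one_le_norm_mul_exp (w : ℂ) : ‖exp w - 1‖ ≤ ‖w‖ * Real.exp ‖w‖ := by
  simpa using norm_exp_sub_sum_le_norm_mul_exp w 1

lemma cpow_half_sq (z : ℂ) : (z ^ (1 / 2 : ℂ)) ^ 2 = z := by
  rw [one_div]; exact_mod_cast cpow_ofNat_inv_pow z 2

lemma norm_cpow_half (z : ℂ) : ‖z ^ (1 / 2 : ℂ)‖ = √‖z‖ := by
  rw [← Complex.ofReal_ofNat, ← ofReal_one, ← ofReal_div, norm_cpow_real, Real.sqrt_eq_rpow]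

lemma sqrt_norm_div_two_le_re_cpow_half {z : ℂ} (hz : 0 ≤ z.re) :
    √(‖z‖ / 2) ≤ (z ^ (1 / 2 : ℂ)).re := by
  rw [one_div, cpow_inv_two_re]
  gcongr
  linarith

lemma norm_cpow_half_sub_mul_le {z : ℂ} (hz : 0 ≤ z.re) (w : ℂ) :
    ‖z ^ (1 / 2 : ℂ) - w ^ (1 / 2 : ℂ)‖ * ‖z ^ (1 / 2 : ℂ)‖ ≤ √2 * ‖z - w‖ := by
  set u := z ^ (1 / 2 : ℂ)
  set v := w ^ (1 / 2 : ℂ)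
  have hfactor : (u - v) * (u + v) = z - w := by
    rw [← cpow_half_sq z, ← cpow_half_sq w]; ring
  have hsum : ‖u‖ ≤ √2 * ‖u + v‖ := calc
    ‖u‖ = √2 * √(‖z‖ / 2) := by
      rw [norm_cpow_half, ← Real.sqrt_mul zero_le_two]; ring_nf
    _ ≤ √2 * (u.re + v.re) := by
      have hv : 0 ≤ v.re := by simp only [v, one_div, cpow_inv_two_re]; positivity
      gcongr
      linarith [sqrt_norm_div_two_le_re_cpow_half hz]
    _ ≤ √2 * ‖u + v‖ := by gcongr; exact (add_re u v) ▸ re_le_norm _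
  calc ‖u - v‖ * ‖u‖ ≤ ‖u - v‖ * (√2 * ‖u + v‖) := by gcongr
    _ = √2 * ‖z - w‖ := by rw [← hfactor, norm_mul]; ring

end Complex

lemma norm_mul_exp_neg_mul_sq_sub_le {α : ℝ} (hα : 0 < α) {δ : ℂ} (hδ : ‖δ‖ ≤ α / 4)
    (ν μ : ℂ) (x : ℝ) :
    ‖ν * Complex.exp (-δ * (x : ℂ) ^ 2) - μ‖
      ≤ (‖ν - μ‖ + 4 * ‖ν‖ * ‖δ‖ / α) * Real.exp (α / 2 * x ^ 2) := by
  set t := α / 4 * x ^ 2 with ht_def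
  have ht : t ≤ Real.exp t := by linarith [Real.add_one_le_exp t]
  have hexp : Real.exp t * Real.exp t = Real.exp (α / 2 * x ^ 2) := by
    rw [← Real.exp_add, ht_def]; ring_nf
  have hnorm : ‖-δ * (x : ℂ) ^ 2‖ = ‖δ‖ * x ^ 2 := by
    rw [norm_mul, norm_neg, norm_pow, Complex.norm_real, Real.norm_eq_abs, sq_abs]
  have hone : ‖Complex.exp (-δ * (x : ℂ) ^ 2) - 1‖ ≤ 4 * ‖δ‖ / α * Real.exp (α / 2 * x ^ 2) :=
    calc _ ≤ ‖δ‖ * x ^ 2 * Real.exp (‖δ‖ * x ^ 2) :=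
          hnorm ▸ Complex.norm_exp_sub_one_le_norm_mul_exp _
      _ ≤ ‖δ‖ * x ^ 2 * Real.exp t := by rw [ht_def]; gcongr
      _ = 4 * ‖δ‖ / α * (t * Real.exp t) := by field_simp; ring
      _ ≤ 4 * ‖δ‖ / α * Real.exp (α / 2 * x ^ 2) := by
          rw [← hexp]; gcongr
  calc ‖ν * Complex.exp (-δ * (x : ℂ) ^ 2) - μ‖
      = ‖ν * (Complex.exp (-δ * (x : ℂ) ^ 2) - 1) + (ν - μ)‖ := by ring_nf
    _ ≤ ‖ν‖ * (4 * ‖δ‖ / α * Real.exp (α / 2 * x ^ 2)) + ‖ν - μ‖ * Real.exp (α / 2 * x ^ 2) := by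
        grw [norm_add_le, norm_mul, hone]
        exact add_le_add_right (le_mul_of_one_le_right (norm_nonneg _)
          (Real.one_le_exp (by positivity))) _
    _ = _ := by ring

lemma MeasureTheory.Lp.norm_le_of_ae_norm_le_gaussian {f : Lp ℂ 2 (volume : Measure ℝ)} {E t : ℝ}
    (hE : 0 ≤ E) (ht : 0 < t) (hf : ∀ᵐ x ∂volume, ‖f x‖ ≤ E * Real.exp (-t * x ^ 2)) :
    ‖f‖ ≤ E * (π / (2 * t)) ^ (1 / 4 : ℝ) := by
  set M : ℝ → ℝ := fun x => E * Real.exp (-t * x ^ 2)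
  have hM_sq : ∀ x, ‖M x‖ ^ (2 : ℝ) = E ^ 2 * Real.exp (-(2 * t) * x ^ 2) := fun x => by
    rw [Real.norm_of_nonneg (by positivity), Real.rpow_two, mul_pow, ← Real.exp_nat_mul]
    ring_nf
  have hM : MemLp M 2 volume := by
    refine (memLp_two_iff_integrable_sq (by fun_prop)).2 ?_
    convert (integrable_exp_neg_mul_sq (by positivity : 0 < 2 * t)).const_mul (E ^ 2) using 2
      with x
    rw [← hM_sq, Real.rpow_two, Real.norm_eq_abs, sq_abs]
  have hnorm_M : eLpNorm M 2 volume = ENNReal.ofReal (E * (π / (2 * t)) ^ (1 / 4 : ℝ)) := by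
    rw [hM.eLpNorm_eq_integral_rpow_norm two_ne_zero ENNReal.ofNat_ne_top]
    simp only [ENNReal.toReal_ofNat, hM_sq, integral_const_mul, integral_gaussian]
    rw [Real.mul_rpow (by positivity) (by positivity), Real.sqrt_eq_rpow, ← Real.rpow_natCast,
      ← Real.rpow_mul hE, ← Real.rpow_mul (by positivity)]
    norm_num
  rw [Lp.norm_def, ← ENNReal.toReal_ofReal (by positivity : 0 ≤ E * (π / (2 * t)) ^ (1 / 4 : ℝ)),
    ← hnorm_M]
  exact ENNReal.toReal_mono (by simp [hnorm_M]) (eLpNorm_mono_ae_real hf)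

lemma norm_gaussC {α : ℝ} (hα : 0 ≤ α) (x : ℝ) :
    ‖gaussC α x‖ = (2 * α / π) ^ (1 / 4 : ℝ) * Real.exp (-α * x ^ 2) := by
  rw [gaussC, norm_mul, Complex.norm_exp, ← Complex.ofReal_ofNat, ← Complex.ofReal_mul,
    ← Complex.ofReal_div, ← Complex.ofReal_one, ← Complex.ofReal_ofNat 4, ← Complex.ofReal_div,
    Complex.norm_cpow_real, Complex.norm_of_nonneg (by positivity)]
  norm_cast

lemma norm_sub_smul_le_of_ae_eq_mul_gaussC {α : ℝ} (hα : 0 < α) {δ : ℂ} (hδ : ‖δ‖ ≤ α / 4)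
    (ν μ : ℂ) {f g : Hsp} (hg : ∀ᵐ x : ℝ, (g : ℝ → ℂ) x = gaussC α x)
    (hf : ∀ᵐ x : ℝ, (f : ℝ → ℂ) x = ν * Complex.exp (-δ * (x : ℂ) ^ 2) * gaussC α x) :
    ‖f - μ • g‖ ≤ 2 * (‖ν - μ‖ + 4 * ‖ν‖ * ‖δ‖ / α) := by
  set T := ‖ν - μ‖ + 4 * ‖ν‖ * ‖δ‖ / α
  have hbound : ∀ᵐ x : ℝ, ‖(f - μ • g : Hsp) x‖
      ≤ T * (2 * α / π) ^ (1 / 4 : ℝ) * Real.exp (-(α / 2) * x ^ 2) := by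
    filter_upwards [Lp.coeFn_sub f (μ • g), Lp.coeFn_smul μ g, hf, hg] with x hsub hsmul hfx hgx
    rw [hsub, Pi.sub_apply, hsmul, Pi.smul_apply, smul_eq_mul, hfx, hgx, ← sub_mul, norm_mul,
      norm_gaussC hα.le]
    calc _ ≤ T * Real.exp (α / 2 * x ^ 2)
          * ((2 * α / π) ^ (1 / 4 : ℝ) * Real.exp (-α * x ^ 2)) := by
          gcongr; exact norm_mul_exp_neg_mul_sq_sub_le hα hδ ν μ x
      _ = _ := by rw [mul_mul_mul_comm, ← Real.exp_add]; ring_nf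
  calc ‖f - μ • g‖ ≤ T * (2 * α / π) ^ (1 / 4 : ℝ) * (π / (2 * (α / 2))) ^ (1 / 4 : ℝ) :=
        Lp.norm_le_of_ae_norm_le_gaussian (by positivity) (by positivity) hbound
    _ = T * 2 ^ (1 / 4 : ℝ) := by
        rw [mul_assoc, ← Real.mul_rpow (by positivity) (by positivity)]
        field_simp
    _ ≤ T * 2 := by
        gcongr
        exact Real.rpow_le_self_of_one_le one_le_two (by norm_num)
    _ = 2 * T := mul_comm _ _

noncomputable def gaussKernel (c d : ℂ) (x y : ℝ) : ℂ :=
  Complex.exp (-c * ((x : ℂ) - y) ^ 2 - d * ((x : ℂ) ^ 2 + (y : ℂ) ^ 2))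

lemma kerHr_eq_gaussKernel (W : ℝ) (ζ : ℂ) (a b : ℝ) :
    kerHr W ζ a b = gaussKernel ((W : ℂ) ^ 2 * ζ ^ 2) (((a : ℂ) + b * Complex.I) / 2) := by
  ext x y
  rw [kerHr, gaussKernel, neg_mul]

lemma integral_gaussKernel_mul_gaussC {c d α : ℂ} (hα : α ^ 2 = 2 * c * d)
    (hs : 0 < (c + α + d).re) (x : ℝ) :
    ∫ y : ℝ, gaussKernel c d x y * gaussC α y
      = (π / (c + α + d)) ^ (1 / 2 : ℂ) * Complex.exp (-(d ^ 2 / (c + α + d)) * (x : ℂ) ^ 2)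
        * gaussC α x := by
  set s := c + α + d with hs_def
  have hs0 : s ≠ 0 := fun h => by simp [h] at hs
  have hintegrand : ∀ y : ℝ, gaussKernel c d x y * gaussC α y = (2 * α / π) ^ (1 / 4 : ℂ) *
      Complex.exp (-s * (y : ℂ) ^ 2 + 2 * c * x * y + -(c + d) * (x : ℂ) ^ 2) := fun y => by
    rw [gaussKernel, gaussC, mul_left_comm, ← Complex.exp_add, hs_def]
    ring_nf
  simp only [hintegrand]
  rw [integral_const_mul, integral_cexp_quadratic (by simpa using hs), neg_neg, gaussC,
    mul_left_comm _ (_ ^ (1 / 4 : ℂ)), mul_assoc (_ ^ (1 / 2 : ℂ)), ← Complex.exp_add]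
  congr 3
  rw [hs_def] at hs0 ⊢
  field_simp
  linear_combination 4 * (x : ℂ) ^ 2 * hα

lemma norm_kerOp_sub_smul_gaussC_le {c d : ℂ} {α : ℝ} (hα : 0 < α)
    (hαcd : (α : ℂ) ^ 2 = 2 * c * d) (hc : 0 ≤ c.re) (hd : 0 ≤ d.re)
    (hd_le : √2 * ‖d‖ ≤ ‖c + α + d‖) (hd_sq_le : 4 * ‖d‖ ^ 2 ≤ α * ‖c + α + d‖)
    {K : Hsp →L[ℂ] Hsp} (hK : IsKerOp (gaussKernel c d) K)
    {g : Hsp} (hg : ∀ᵐ x : ℝ, (g : ℝ → ℂ) x = gaussC α x) :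
    ‖K g - ((π : ℂ) / (c + α)) ^ (1 / 2 : ℂ) • g‖
      ≤ 2 * ‖((π : ℂ) / (c + α)) ^ (1 / 2 : ℂ)‖ * (√2 * ‖d‖ + 8 * ‖d‖ ^ 2 / α)
        / ‖c + α + d‖ := by
  set s := c + α + d with hs_def
  set μ := ((π : ℂ) / (c + α)) ^ (1 / 2 : ℂ)
  set ν := ((π : ℂ) / s) ^ (1 / 2 : ℂ)
  have hs_re : α ≤ s.re := by simp only [hs_def, Complex.add_re, Complex.ofReal_re]; linarith
  have hcα_re : α ≤ (c + α).re := by simp only [Complex.add_re, Complex.ofReal_re]; linarith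
  have hs : 0 < ‖s‖ := hα.trans_le (hs_re.trans (Complex.re_le_norm s))
  have hcα : c + α ≠ 0 := fun h => by simp [h] at hcα_re; linarith
  have hμ_sq : ‖μ‖ ^ 2 = ‖(π : ℂ) / (c + α)‖ := by
    rw [Complex.norm_cpow_half, Real.sq_sqrt (norm_nonneg _)]
  have hμ : 0 < ‖μ‖ := by
    rw [Complex.norm_cpow_half]
    exact Real.sqrt_pos.2 (norm_pos_iff.2 (div_ne_zero (by exact_mod_cast Real.pi_ne_zero) hcα))
  have hνμ : ‖ν - μ‖ ≤ ‖μ‖ * (√2 * ‖d‖ / ‖s‖) := by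
    have hdiff : ‖(π : ℂ) / (c + α) - π / s‖ = ‖μ‖ ^ 2 * (‖d‖ / ‖s‖) := by
      rw [hμ_sq, ← norm_div, ← norm_mul, div_sub_div _ _ hcα (norm_pos_iff.1 hs)]
      congr 1
      field_simp
      ring
    have hre : 0 ≤ ((π : ℂ) / (c + α)).re := by
      rw [Complex.div_re, Complex.ofReal_re, Complex.ofReal_im, zero_mul, zero_div, add_zero]
      exact div_nonneg (mul_nonneg Real.pi_pos.le (by linarith)) (Complex.normSq_nonneg _)
    have h : ‖ν - μ‖ * ‖μ‖ ≤ √2 * (‖μ‖ ^ 2 * (‖d‖ / ‖s‖)) := by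
      rw [norm_sub_rev, ← hdiff]; exact Complex.norm_cpow_half_sub_mul_le hre _
    exact le_of_mul_le_mul_right (h.trans_eq (by ring)) hμ
  have hν : ‖ν‖ ≤ 2 * ‖μ‖ := by
    have : ‖μ‖ * (√2 * ‖d‖ / ‖s‖) ≤ ‖μ‖ :=
      mul_le_of_le_one_right hμ.le ((div_le_one hs).2 hd_le)
    calc ‖ν‖ ≤ ‖μ‖ + ‖ν - μ‖ := norm_le_norm_add_norm_sub' ν μ
      _ ≤ 2 * ‖μ‖ := by linarith
  have hδ : ‖d ^ 2 / s‖ = ‖d‖ ^ 2 / ‖s‖ := by rw [norm_div, norm_pow]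
  have hKg : ∀ᵐ x : ℝ,
      (K g : ℝ → ℂ) x = ν * Complex.exp (-(d ^ 2 / s) * (x : ℂ) ^ 2) * gaussC α x := by
    filter_upwards [hK g] with x hx
    rw [hx, integral_congr_ae (hg.mono fun y hy => by rw [hy]),
      integral_gaussKernel_mul_gaussC hαcd (hα.trans_le hs_re)]
  calc ‖K g - μ • g‖ ≤ 2 * (‖ν - μ‖ + 4 * ‖ν‖ * ‖d ^ 2 / s‖ / α) :=
        norm_sub_smul_le_of_ae_eq_mul_gaussC hα
          (by rw [hδ, div_le_iff₀ hs]; linarith) ν μ hg hKg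
    _ ≤ 2 * (‖μ‖ * (√2 * ‖d‖ / ‖s‖) + 4 * (2 * ‖μ‖) * (‖d‖ ^ 2 / ‖s‖) / α) := by
        rw [hδ]; gcongr
    _ = _ := by field_simp; ring

lemma norm_kerHr_sub_smul_gaussC_le {W : ℝ} {ζ : ℂ} {a b α β : ℝ} (hρ : 0 < (ζ ^ 2).re)
    (ha : 0 ≤ a) (hW : 0 < W) (hα : 0 < α)
    (hα_sq : (α : ℂ) ^ 2 = (W : ℂ) ^ 2 * ζ ^ 2 * ((a : ℂ) + (b : ℂ) * Complex.I))
    (hβ : 0 < β) (hβα : β ≤ α)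
    (hW_large : √2 * ‖((a : ℂ) + b * Complex.I) / 2‖ + 4 * ‖((a : ℂ) + b * Complex.I) / 2‖ ^ 2 / β
      ≤ (ζ ^ 2).re * W ^ 2)
    {K : Hsp →L[ℂ] Hsp} (hK : IsKerOp (kerHr W ζ a b) K)
    {g : Hsp} (hg : ∀ᵐ x : ℝ, (g : ℝ → ℂ) x = gaussC α x) :
    ‖K g - ((π : ℂ) / ((W : ℂ) ^ 2 * ζ ^ 2 + α)) ^ (1 / 2 : ℂ) • g‖
      ≤ 2 * ‖((π : ℂ) / ((W : ℂ) ^ 2 * ζ ^ 2 + α)) ^ (1 / 2 : ℂ)‖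
        * (√2 * ‖((a : ℂ) + b * Complex.I) / 2‖ + 8 * ‖((a : ℂ) + b * Complex.I) / 2‖ ^ 2 / β)
        / ((ζ ^ 2).re * W ^ 2) := by
  set d : ℂ := ((a : ℂ) + b * Complex.I) / 2
  set c : ℂ := (W : ℂ) ^ 2 * ζ ^ 2
  have hd_re : d.re = a / 2 := by simp [d]
  have hc_re : c.re = (ζ ^ 2).re * W ^ 2 := by
    rw [show c = ((W ^ 2 : ℝ) : ℂ) * ζ ^ 2 by push_cast; rfl, Complex.re_ofReal_mul, mul_comm]
  have hs : (ζ ^ 2).re * W ^ 2 ≤ ‖c + α + d‖ := by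
    refine le_trans ?_ (Complex.re_le_norm _)
    simp only [Complex.add_re, hc_re, Complex.ofReal_re, hd_re]
    linarith
  have hd_sq_nonneg : 0 ≤ 4 * ‖d‖ ^ 2 / β := by positivity
  have hd_le : √2 * ‖d‖ ≤ ‖c + α + d‖ := by linarith
  have hd_sq_le : 4 * ‖d‖ ^ 2 ≤ α * ‖c + α + d‖ := calc
    4 * ‖d‖ ^ 2 = β * (4 * ‖d‖ ^ 2 / β) := by field_simp
    _ ≤ α * ‖c + α + d‖ := by gcongr; linarith [show 0 ≤ √2 * ‖d‖ by positivity]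
  calc _ ≤ 2 * ‖((π : ℂ) / (c + α)) ^ (1 / 2 : ℂ)‖ * (√2 * ‖d‖ + 8 * ‖d‖ ^ 2 / α)
          / ‖c + α + d‖ :=
        norm_kerOp_sub_smul_gaussC_le hα (by rw [hα_sq]; ring) (hc_re ▸ by positivity)
          (by rw [hd_re]; positivity) hd_le hd_sq_le (kerHr_eq_gaussKernel W ζ a b ▸ hK) hg
    _ ≤ _ := by gcongr

/-- if `ζ²(a+ib)` is real and positive and `α > 0` satisfies
`α² = W²ζ²(a+ib)`, then `‖K_hr g_α − μ g_α‖ ≤ C_ε·|μ|·W^{−2+2ε}` where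
`μ = √(π/(W²ζ²+α))`. -/
theorem stmt_10 :
    ∀ (ζ : ℂ) (a b : ℝ), ‖ζ‖ = 1 → 0 < (ζ^2).re → 0 < a →
    (ζ^2 * ((a : ℂ) + (b : ℂ) * Complex.I)).im = 0 →
    0 < (ζ^2 * ((a : ℂ) + (b : ℂ) * Complex.I)).re →
    ∀ ε : ℝ, 0 < ε → ε < 1 →
    ∃ Cε : ℝ, 0 < Cε ∧ ∃ W₀ : ℝ, 0 < W₀ ∧
    ∀ W : ℝ, W₀ ≤ W →
    ∀ α : ℝ, 0 < α → ((α : ℂ))^2 = (W : ℂ)^2 * ζ^2 * ((a : ℂ) + (b : ℂ) * Complex.I) →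
    ∀ Khr : Hsp →L[ℂ] Hsp, IsKerOp (kerHr W ζ a b) Khr →
    ∀ g : Hsp, (∀ᵐ x : ℝ, (g : ℝ → ℂ) x = gaussC (α : ℂ) x) →
      ‖Khr g - (((π : ℂ) / ((W : ℂ)^2 * ζ^2 + (α : ℂ))) ^ (1/2 : ℂ)) • g‖ ≤
        Cε * ‖((π : ℂ) / ((W : ℂ)^2 * ζ^2 + (α : ℂ))) ^ (1/2 : ℂ)‖ * W ^ (-2 + 2*ε) := by
  intro ζ a b _ hρ ha him hr ε hε _
  set ρ := (ζ ^ 2).re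
  set r := (ζ ^ 2 * ((a : ℂ) + (b : ℂ) * Complex.I)).re
  set n := ‖((a : ℂ) + b * Complex.I) / 2‖
  have hn : 0 < n := by
    have : (((a : ℂ) + b * Complex.I) / 2).re = a / 2 := by simp
    linarith [Complex.re_le_norm (((a : ℂ) + b * Complex.I) / 2)]
  refine ⟨2 * ((√2 * n + 8 * n ^ 2 / √r) / ρ), by positivity,
    max 1 ((√2 * n + 4 * n ^ 2 / √r) / ρ), by positivity, ?_⟩
  intro W hW α hα hα_sq K hK g hg
  have hW1 : 1 ≤ W := le_of_max_le_left hW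
  have hr_le : √r ≤ α := by
    have hα_sq' : α ^ 2 = W ^ 2 * r := by
      have : ζ ^ 2 * ((a : ℂ) + (b : ℂ) * Complex.I) = r := by
        rw [← Complex.re_add_im (ζ ^ 2 * _), him]; simp [r]
      have : (α : ℂ) ^ 2 = ((W ^ 2 * r : ℝ) : ℂ) := by rw [hα_sq, mul_assoc, this]; push_cast; ring
      exact_mod_cast this
    exact Real.sqrt_le_iff.2 ⟨hα.le, hα_sq' ▸ le_mul_of_one_le_left hr.le (one_le_pow₀ hW1)⟩
  calc _ ≤ 2 * ‖((π : ℂ) / ((W : ℂ) ^ 2 * ζ ^ 2 + α)) ^ (1 / 2 : ℂ)‖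
          * (√2 * n + 8 * n ^ 2 / √r) / (ρ * W ^ 2) :=
        norm_kerHr_sub_smul_gaussC_le hρ ha.le (by positivity) hα hα_sq (by positivity) hr_le
          ((div_le_iff₀' hρ).1 ((le_of_max_le_right hW).trans (le_self_pow₀ hW1 two_ne_zero)))
          hK hg
    _ = 2 * ((√2 * n + 8 * n ^ 2 / √r) / ρ) * ‖((π : ℂ) / ((W : ℂ) ^ 2 * ζ ^ 2 + α)) ^ (1 / 2 : ℂ)‖
          * W ^ (-2 : ℝ) := by
        rw [Real.rpow_neg (by positivity), Real.rpow_two]; field_simp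
    _ ≤ _ := by gcongr; linarith
end

section
/- For all x, y ∈ ℝ, the kernel of K*K satisfies the pointwise bound |(K*K)(x,y)| = |∫_ℝ conj(K(r,x))·K(r,y) dr| ≤ √(π/(2W²·Re ζ²)) · exp( −(Re U(x) + Re U(y))/2 − (W²/2)·(Re ζ²)·(x−y)² ). -/
open MeasureTheory Complex Real
open scoped ComplexInnerProductSpace

noncomputable section

/-- The kernel `K(x,y) = exp(−W²ζ²(x−y)² − U(x)/2 − U(y)/2)`. -/
def kerK (W : ℝ) (ζ : ℂ) (U : ℝ → ℂ) (x y : ℝ) : ℂ :=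
  Complex.exp (-(W : ℂ)^2 * ζ^2 * ((x : ℂ) - (y : ℂ))^2 - U x / 2 - U y / 2)

/-- The harmonic-approximation kernel `K̃(x,y) = exp(−W²ζ²(x−y)² − (U''(0)/4)(x²+y²))`. -/
def kerKt (W : ℝ) (ζ : ℂ) (U : ℝ → ℂ) (x y : ℝ) : ℂ :=
  Complex.exp (-(W : ℂ)^2 * ζ^2 * ((x : ℂ) - (y : ℂ))^2
    - (deriv (deriv U) 0 / 4) * ((x : ℂ)^2 + (y : ℂ)^2))

/-- `α = W·√(ζ²U''(0)/2)`, a positive real by assumption (U2). -/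
def alph (W : ℝ) (ζ : ℂ) (U : ℝ → ℂ) : ℝ :=
  W * Real.sqrt ((ζ^2 * deriv (deriv U) 0).re / 2)

/-- `μ = √(π/(W²ζ² + α))`, principal branch. -/
def muK (W : ℝ) (ζ : ℂ) (U : ℝ → ℂ) : ℂ :=
  ((π : ℂ) / ((W : ℂ)^2 * ζ^2 + (alph W ζ U : ℂ))) ^ (1/2 : ℂ)

/-- The Gaussian `g_α(x) = (2α/π)^{1/4}·exp(−αx²)` (for real `α > 0`, a unit vector). -/
def gaussF (α : ℝ) (x : ℝ) : ℂ :=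
  (((2*α/π) ^ (1/4 : ℝ) : ℝ) : ℂ) * Complex.exp (-(α : ℂ) * (x : ℂ)^2)

/-- The orthogonal projection of `L²(ℝ)` onto the orthogonal complement of the
unit vector `g`: `P u = u − ⟪g, u⟫·g`. -/
def projP (g : Hsp) : Hsp →L[ℂ] Hsp :=
  ContinuousLinearMap.id ℂ Hsp - (innerSL ℂ g).smulRight g

/-- Assumptions (U1)–(U4) on the potential `U`, together with the conditions on `ζ`. -/
structure UHyp (C c γ : ℝ) (ζ : ℂ) (U : ℝ → ℂ) : Prop where
  hζ : ‖ζ‖ = 1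
  hζre : 0 < (ζ^2).re
  hU1smooth : ContDiff ℝ (⊤ : ℕ∞) U
  hU1zero : U 0 = 0
  hU1deriv : deriv U 0 = 0
  hU2im : (ζ^2 * deriv (deriv U) 0).im = 0
  hU2pos : 0 < (ζ^2 * deriv (deriv U) 0).re
  hU3 : ∀ x : ℝ, (1/C) * min 1 (x^2) ≤ (U x).re
  hU4 : ∃ UC : ℂ → ℂ, (∀ x : ℝ, UC x = U x) ∧
      AnalyticOnNhd ℂ UC {z : ℂ | |z.im| ≤ c} ∧
      ∀ z : ℂ, |z.im| ≤ c → ‖deriv UC z‖ ≤ C * (max 1 (UC z).re) ^ γ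

end

/-- pointwise Gaussian bound on the kernel of `K*K`. -/
theorem stmt_17 :
    ∀ (C c γ : ℝ) (ζ : ℂ) (U : ℝ → ℂ), 1 ≤ C → 0 < c → 1 < γ → UHyp C c γ ζ U →
    ∀ W : ℝ, 0 < W →
    ∀ x y : ℝ,
      ‖∫ r : ℝ, starRingEnd ℂ (kerK W ζ U r x) * kerK W ζ U r y‖ ≤
        Real.sqrt (π / (2 * W^2 * (ζ^2).re)) *
          Real.exp (-((U x).re + (U y).re) / 2 - (W^2 / 2) * (ζ^2).re * (x - y)^2) := by
  intro C c γ ζ U hC hc hγ hyp W hW x y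
  have hζre := hyp.hζre
  have hU3 : ∀ r : ℝ, (0:ℝ) ≤ (U r).re := fun r =>
    le_trans (mul_nonneg (by positivity) (le_min zero_le_one (sq_nonneg r))) (hyp.hU3 r)
  simp only [kerK]
  set a : ℝ := W^2 * (ζ^2).re with ha_def
  have ha : 0 < a := by positivity
  have key : ∀ u v : ℝ, (-(W:ℂ)^2*ζ^2*((u:ℂ)-(v:ℂ))^2 - U u/2 - U v/2).re
      = -(W^2*(ζ^2).re*(u-v)^2) - (U u).re/2 - (U v).re/2 := by
    intro u v
    have h1 : -(W:ℂ)^2*ζ^2*((u:ℂ)-(v:ℂ))^2 = ((-(W^2*(u-v)^2) : ℝ) : ℂ) * ζ^2 := by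
      push_cast; ring
    rw [Complex.sub_re, Complex.sub_re, h1, Complex.re_ofReal_mul,
      show (2:ℂ) = ((2:ℝ):ℂ) by norm_num, Complex.div_ofReal_re, Complex.div_ofReal_re]
    ring
  have hnorm : ∀ r : ℝ,
      ‖starRingEnd ℂ (Complex.exp (-(W : ℂ)^2 * ζ^2 * ((r : ℂ) - (x : ℂ))^2 - U r / 2 - U x / 2)) * Complex.exp (-(W : ℂ)^2 * ζ^2 * ((r : ℂ) - (y : ℂ))^2 - U r / 2 - U y / 2)‖
      = Real.exp (-(a*((r-x)^2+(r-y)^2)) - (U r).re - ((U x).re+(U y).re)/2) := by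
    intro r
    rw [← Complex.exp_conj, ← Complex.exp_add, Complex.norm_exp,
      Complex.add_re, Complex.conj_re, key, key]
    congr 1
    ring
  set m : ℝ := (x+y)/2 with hm_def
  set c0 : ℝ := Real.exp (-((U x).re+(U y).re)/2 - a*(x-y)^2/2) with hc0_def
  have hGint : Integrable (fun r : ℝ => c0 * Real.exp (-(2*a)*(r-m)^2)) := by
    exact ((integrable_exp_neg_mul_sq (by linarith : (0:ℝ) < 2*a)).comp_sub_right m).const_mul c0
  have hbound : ∀ r : ℝ,
      ‖starRingEnd ℂ (Complex.exp (-(W : ℂ)^2 * ζ^2 * ((r : ℂ) - (x : ℂ))^2 - U r / 2 - U x / 2)) * Complex.exp (-(W : ℂ)^2 * ζ^2 * ((r : ℂ) - (y : ℂ))^2 - U r / 2 - U y / 2)‖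
      ≤ c0 * Real.exp (-(2*a)*(r-m)^2) := by
    intro r
    rw [hnorm r, hc0_def, ← Real.exp_add]
    apply Real.exp_le_exp.2
    have h2 : (r-x)^2+(r-y)^2 = 2*(r-m)^2 + (x-y)^2/2 := by
      rw [hm_def]; ring
    have := hU3 r
    nlinarith [this]
  calc ‖∫ r : ℝ, starRingEnd ℂ (Complex.exp (-(W : ℂ)^2 * ζ^2 * ((r : ℂ) - (x : ℂ))^2 - U r / 2 - U x / 2)) * Complex.exp (-(W : ℂ)^2 * ζ^2 * ((r : ℂ) - (y : ℂ))^2 - U r / 2 - U y / 2)‖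
      ≤ ∫ r : ℝ, ‖starRingEnd ℂ (Complex.exp (-(W : ℂ)^2 * ζ^2 * ((r : ℂ) - (x : ℂ))^2 - U r / 2 - U x / 2)) * Complex.exp (-(W : ℂ)^2 * ζ^2 * ((r : ℂ) - (y : ℂ))^2 - U r / 2 - U y / 2)‖ :=
        norm_integral_le_integral_norm _
    _ ≤ ∫ r : ℝ, c0 * Real.exp (-(2*a)*(r-m)^2) := by
        apply integral_mono_of_nonneg
        · filter_upwards with r; positivity
        · exact hGint
        · filter_upwards with r; exact hbound r
    _ = c0 * Real.sqrt (π / (2*a)) := by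
        rw [MeasureTheory.integral_const_mul,
          MeasureTheory.integral_sub_right_eq_self (fun r : ℝ => Real.exp (-(2*a)*r^2)) m,
          integral_gaussian]
    _ = Real.sqrt (π / (2 * W^2 * (ζ^2).re)) *
          Real.exp (-((U x).re + (U y).re) / 2 - (W^2 / 2) * (ζ^2).re * (x - y)^2) := by
        rw [mul_comm]
        congr 2
        · ring
        · rw [hc0_def]; congr 1; rw [ha_def]; ring
end
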